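/- Let V be a vector space with bilinear bracket B and φ a linear map on V. Define T^{(n)}_φ recursively: T^{(0)} = B, T^{(1)} = T_φ the Nijenhuis torsion, and T^{(n+1)}(x,y) = φ²T^{(n)}(x,y) + T^{(n)}(φx,φy) − φ(T^{(n)}(φx,y)+T^{(n)}(x,φy)). Then the explicit formula T^{(n)}(x,y) = Σ_{i,j=0}^{n} (−1)^{i+j} C(n,i) C(n,j) φ^{i+j} B(φ^{n−i}x, φ^{n−j}y) holds for all n ≥ 0 and all x,y ∈ V. -/

import Mathlib

/-!
In the recursion, `T⁽ⁿ⁺¹⁾ = (R₁ - L)(R₂ - L) T⁽ⁿ⁾` for the operators on binary maps `V → V → V`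
given by postcomposing with `φ` (`L`) and precomposing with `φ` in the first (`R₁`) or the second
(`R₂`) argument. These three operators commute, so `T⁽ⁿ⁾ = (R₁ - L)ⁿ (R₂ - L)ⁿ B`, and each factor
is expanded by the binomial theorem.
-/

/-- The higher (Courant–)Nijenhuis torsions of `φ` relative to a bilinear bracket `B`:
`T⁽⁰⁾ = B` and
`T⁽ⁿ⁺¹⁾(x,y) = φ²T⁽ⁿ⁾(x,y) + T⁽ⁿ⁾(φx,φy) - φ(T⁽ⁿ⁾(φx,y) + T⁽ⁿ⁾(x,φy))`
(so `T⁽¹⁾` is the usual Nijenhuis torsion). -/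
def higherCNtorsion {K V : Type*} [Field K] [AddCommGroup V] [Module K V]
    (φ : Module.End K V) (B : V →ₗ[K] V →ₗ[K] V) : ℕ → V → V → V
  | 0 => fun x y => B x y
  | n + 1 => fun x y =>
      φ (φ (higherCNtorsion φ B n x y)) + higherCNtorsion φ B n (φ x) (φ y)
        - φ (higherCNtorsion φ B n (φ x) y + higherCNtorsion φ B n x (φ y))

open Finset

theorem Commute.sub_pow_apply {R W : Type*} [Ring R] [AddCommGroup W] [Module R W]
    {f g : Module.End R W} (h : Commute f g) (n : ℕ) (w : W) :
    ((g - f) ^ n) w =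
      ∑ m ∈ range (n + 1), ((-1 : R) ^ m * n.choose m) • (f ^ m) ((g ^ (n - m)) w) := by
  rw [sub_eq_neg_add, h.neg_left.add_pow, LinearMap.sum_apply]
  refine sum_congr rfl fun m _ => ?_
  rw [mul_smul, Module.End.mul_apply, Module.End.mul_apply, Module.End.natCast_apply, map_nsmul,
    map_nsmul, Nat.cast_smul_eq_nsmul]
  rcases m.even_or_odd with hm | hm <;> simp [hm.neg_pow]

namespace CNTorsion

variable {R V : Type*} [Ring R] [AddCommGroup V] [Module R V] (φ : Module.End R V)

def postcomp : Module.End R (V → V → V) where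
  toFun T x y := φ (T x y)
  map_add' _ _ := by ext; simp
  map_smul' _ _ := by ext; simp

def precompFst : Module.End R (V → V → V) where
  toFun T x y := T (φ x) y
  map_add' _ _ := rfl
  map_smul' _ _ := rfl

def precompSnd : Module.End R (V → V → V) where
  toFun T x y := T x (φ y)
  map_add' _ _ := rfl
  map_smul' _ _ := rfl

theorem postcomp_pow_apply (k : ℕ) (T : V → V → V) (x y : V) :
    (postcomp φ ^ k) T x y = (φ ^ k) (T x y) := by
  induction k with
  | zero => rfl
  | succ k ih => rw [pow_succ', pow_succ', Module.End.mul_apply, Module.End.mul_apply, ← ih]; rfl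

theorem precompFst_pow_apply (k : ℕ) (T : V → V → V) (x y : V) :
    (precompFst φ ^ k) T x y = T ((φ ^ k) x) y := by
  induction k generalizing T with
  | zero => rfl
  | succ k ih => rw [pow_succ, pow_succ', Module.End.mul_apply, Module.End.mul_apply, ih]; rfl

theorem precompSnd_pow_apply (k : ℕ) (T : V → V → V) (x y : V) :
    (precompSnd φ ^ k) T x y = T x ((φ ^ k) y) := by
  induction k generalizing T with
  | zero => rfl
  | succ k ih => rw [pow_succ, pow_succ', Module.End.mul_apply, Module.End.mul_apply, ih]; rfl

theorem commute_postcomp_precompFst : Commute (postcomp φ) (precompFst φ) := rfl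
theorem commute_postcomp_precompSnd : Commute (postcomp φ) (precompSnd φ) := rfl
theorem commute_precompFst_precompSnd : Commute (precompFst φ) (precompSnd φ) := rfl

theorem precompFst_sub_postcomp_pow_apply (n : ℕ) (T : V → V → V) (x y : V) :
    ((precompFst φ - postcomp φ) ^ n) T x y =
      ∑ i ∈ range (n + 1), ((-1 : R) ^ i * n.choose i) • (φ ^ i) (T ((φ ^ (n - i)) x) y) := by
  simp [(commute_postcomp_precompFst φ).sub_pow_apply, postcomp_pow_apply, precompFst_pow_apply]

theorem precompSnd_sub_postcomp_pow_apply (n : ℕ) (T : V → V → V) (x y : V) :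
    ((precompSnd φ - postcomp φ) ^ n) T x y =
      ∑ j ∈ range (n + 1), ((-1 : R) ^ j * n.choose j) • (φ ^ j) (T x ((φ ^ (n - j)) y)) := by
  simp [(commute_postcomp_precompSnd φ).sub_pow_apply, postcomp_pow_apply, precompSnd_pow_apply]

def step : Module.End R (V → V → V) :=
  (precompFst φ - postcomp φ) * (precompSnd φ - postcomp φ)

theorem step_pow (n : ℕ) :
    step φ ^ n = (precompFst φ - postcomp φ) ^ n * (precompSnd φ - postcomp φ) ^ n :=
  (((commute_precompFst_precompSnd φ).sub_right (commute_postcomp_precompFst φ).symm).sub_left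
    ((commute_postcomp_precompSnd φ).sub_right (Commute.refl _))).mul_pow n

end CNTorsion

open CNTorsion

theorem higherCNtorsion_succ {K V : Type*} [Field K] [AddCommGroup V] [Module K V]
    (φ : Module.End K V) (B : V →ₗ[K] V →ₗ[K] V) (n : ℕ) :
    higherCNtorsion φ B (n + 1) = step φ (higherCNtorsion φ B n) := by
  funext x y
  simp only [higherCNtorsion, step, Module.End.mul_apply, LinearMap.sub_apply, postcomp,
    precompFst, precompSnd, LinearMap.coe_mk, AddHom.coe_mk, Pi.sub_apply, map_sub, map_add]
  abel

theorem higherCNtorsion_eq_step_pow {K V : Type*} [Field K] [AddCommGroup V] [Module K V]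
    (φ : Module.End K V) (B : V →ₗ[K] V →ₗ[K] V) (n : ℕ) :
    higherCNtorsion φ B n = (step φ ^ n) (fun x y => B x y) := by
  induction n with
  | zero => rfl
  | succ n ih => rw [higherCNtorsion_succ, ih, pow_succ', Module.End.mul_apply]

/-- The explicit formula
`T⁽ⁿ⁾(x,y) = Σ_{i,j=0}^{n} (-1)^{i+j} C(n,i) C(n,j) φ^{i+j} B(φ^{n-i}x, φ^{n-j}y)`
holds for all `n ≥ 0`. -/
theorem higherCNtorsion_explicit
    (K : Type*) [Field K] (V : Type*) [AddCommGroup V] [Module K V]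
    (B : V →ₗ[K] V →ₗ[K] V) (φ : Module.End K V) :
    ∀ (n : ℕ) (x y : V),
      higherCNtorsion φ B n x y =
        ∑ i ∈ Finset.range (n + 1), ∑ j ∈ Finset.range (n + 1),
          ((-1 : K) ^ (i + j) * (n.choose i : K) * (n.choose j : K)) •
            (φ ^ (i + j)) (B ((φ ^ (n - i)) x) ((φ ^ (n - j)) y)) := by
  intro n x y
  rw [higherCNtorsion_eq_step_pow, step_pow, Module.End.mul_apply,
    precompFst_sub_postcomp_pow_apply]
  refine sum_congr rfl fun i _ => ?_
  rw [precompSnd_sub_postcomp_pow_apply, map_sum, smul_sum]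
  refine sum_congr rfl fun j _ => ?_
  rw [map_smul, smul_smul, pow_add φ, Module.End.mul_apply]
  congr 1
  ring
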